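/- For every C_β > 0 there exists a constant C₁ > 0, depending only on C_β, with the following property. Let N ≥ 1 be an integer, ε := 1/N, φ''_F, φ''_{2F} ∈ ℝ, and let β : ℤ → [0,1] be 2N-periodic with interface set I := {ℓ ∈ {−N+1,…,N} : 0 < β_{ℓ+j} < 1 for some j ∈ {−2,−1,1,2}} of cardinality K ≥ 1; assume (D^{(j)}β)_ℓ = 0 for all ℓ ∉ I and j = 1,2,3, and ‖D^{(j)}β‖_{ℓ∞} ≤ C_β (Kε)^{−j} for j = 1,2,3. Then for every u ∈ U, ⟨L^{bqcf} u, u⟩ ≥ (c₀ − C₁ |φ''_{2F}| K^{−5/2} ε^{−1/2}) ‖Du‖²_{ℓ²_ε}, where c₀ := min(φ''_F, φ''_F + 4φ''_{2F}). -/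

import Mathlib

open Finset

noncomputable section

/-- mesh size ε = 1/N -/
def eps (N : ℕ) : ℝ := 1 / N

/-- the periodic cell {-N+1, …, N} -/
def cell (N : ℕ) : Finset ℤ := Finset.Icc (-(N : ℤ) + 1) N

/-- 2N-periodicity -/
def Per (N : ℕ) (u : ℤ → ℝ) : Prop := ∀ ℓ : ℤ, u (ℓ + 2 * N) = u ℓ

/-- zero mean over a period -/
def MeanZero (N : ℕ) (u : ℤ → ℝ) : Prop := ∑ ℓ ∈ cell N, u ℓ = 0

/-- first discrete derivative (Du)_ℓ = (u_ℓ - u_{ℓ-1})/ε -/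
def D (N : ℕ) (u : ℤ → ℝ) (ℓ : ℤ) : ℝ := (u ℓ - u (ℓ - 1)) / eps N

/-- second discrete derivative (D²u)_ℓ = ((Du)_{ℓ+1} - (Du)_ℓ)/ε -/
def D2 (N : ℕ) (u : ℤ → ℝ) (ℓ : ℤ) : ℝ := (D N u (ℓ + 1) - D N u ℓ) / eps N

/-- third discrete derivative (D³u)_ℓ = ((D²u)_ℓ - (D²u)_{ℓ-1})/ε -/
def D3 (N : ℕ) (u : ℤ → ℝ) (ℓ : ℤ) : ℝ := (D2 N u ℓ - D2 N u (ℓ - 1)) / eps N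

/-- the ℓ²_ε inner product ⟨u,w⟩ = ε Σ u_ℓ w_ℓ -/
def ip (N : ℕ) (u w : ℤ → ℝ) : ℝ := ∑ ℓ ∈ cell N, eps N * (u ℓ * w ℓ)

/-- the squared ℓ²_ε norm ‖u‖² = ε Σ |u_ℓ|² -/
def nsq (N : ℕ) (u : ℤ → ℝ) : ℝ := ∑ ℓ ∈ cell N, eps N * |u ℓ| ^ 2

attribute [local instance] Classical.propDecidable

/-- the interface (blending) index set -/
def interf (N : ℕ) (β : ℤ → ℝ) : Finset ℤ :=
  (cell N).filter fun ℓ =>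
    ∃ j ∈ ({-2, -1, 1, 2} : Finset ℤ), 0 < β (ℓ + j) ∧ β (ℓ + j) < 1

/-- linearized B-QCF operator
`(L^{bqcf} v)_ℓ := φ''_F (−v_{ℓ+1}+2v_ℓ−v_{ℓ−1})/ε²
  + φ''_{2F}[β_ℓ(−v_{ℓ+2}+2v_ℓ−v_{ℓ−2})/ε² + (1−β_ℓ)·4·(−v_{ℓ+1}+2v_ℓ−v_{ℓ−1})/ε²]` -/
def Lbqcf (N : ℕ) (cF c2F : ℝ) (β : ℤ → ℝ) (v : ℤ → ℝ) (ℓ : ℤ) : ℝ :=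
  cF * (-v (ℓ + 1) + 2 * v ℓ - v (ℓ - 1)) / eps N ^ 2
    + c2F * (β ℓ * (-v (ℓ + 2) + 2 * v ℓ - v (ℓ - 2)) / eps N ^ 2
        + (1 - β ℓ) * 4 * (-v (ℓ + 1) + 2 * v ℓ - v (ℓ - 1)) / eps N ^ 2)

/-!
With `δ` the backward and `Δ` the second difference, `-v(ℓ+2) + 2v(ℓ) - v(ℓ-2) = -4Δv(ℓ) - Δ²v(ℓ)`,
so `ε² L^{bqcf} = (φ''_F + 4φ''_{2F})(-Δ) - φ''_{2F} β Δ²`. Two summations by parts turn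
`Σ β Δ²u · u` into `Σ β (Δu)²`, which lies in `[0, 4 Σ (δu)²]` and produces `c₀`, plus remainders
carrying the second and third differences of `β`. The former are bounded by `C_β K⁻² Σ (δu)²`.
The latter vanishes off the interface; Cauchy–Schwarz over the `K` interface sites and the bound
`‖u‖_∞ ≤ Σ |δu| ≤ √(2N) (Σ (δu)²)^{1/2}` for mean-zero `u` bound it by
`√2 C_β K^{-5/2} ε^{-1/2} Σ (δu)²`, which also dominates `C_β K⁻² Σ (δu)²` because `K ≤ 2N`.
-/

def bdiff (f : ℤ → ℝ) (ℓ : ℤ) : ℝ := f ℓ - f (ℓ - 1)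

def secondDiff (f : ℤ → ℝ) (ℓ : ℤ) : ℝ := f (ℓ + 1) - 2 * f ℓ + f (ℓ - 1)

def thirdDiff (f : ℤ → ℝ) (ℓ : ℤ) : ℝ := secondDiff f ℓ - secondDiff f (ℓ - 1)

section Periodic

variable {N : ℕ} {f g H : ℤ → ℝ}

lemma Per.apply_add_add (hf : Per N f) (x c : ℤ) : f (x + 2 * N + c) = f (x + c) := by
  rw [add_right_comm]; exact hf _

lemma Per.apply_add_sub (hf : Per N f) (x c : ℤ) : f (x + 2 * N - c) = f (x - c) := by
  rw [add_sub_right_comm]; exact hf _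

lemma sum_Icc_comp_add_one_add (f : ℤ → ℝ) {a b : ℤ} (h : a ≤ b + 1) :
    ∑ ℓ ∈ Icc a b, f (ℓ + 1) + f a = ∑ ℓ ∈ Icc a b, f ℓ + f (b + 1) := by
  have hshift : ∑ ℓ ∈ Icc a b, f (ℓ + 1) = ∑ ℓ ∈ Icc (a + 1) (b + 1), f ℓ := by
    rw [← map_add_right_Icc, sum_map]; rfl
  rw [hshift, add_comm, ← sum_insert (by simp), insert_Icc_add_one_left_eq_Icc h,
    ← insert_Icc_right_eq_Icc_add_one h, sum_insert (by simp), add_comm]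

lemma sum_cell_comp_add_one (hf : Per N f) : ∑ ℓ ∈ cell N, f (ℓ + 1) = ∑ ℓ ∈ cell N, f ℓ := by
  have h := sum_Icc_comp_add_one_add f (show -(N : ℤ) + 1 ≤ N + 1 by omega)
  rwa [show (N : ℤ) + 1 = -N + 1 + 2 * N by ring, hf, add_left_inj] at h

lemma sum_cell_comp_sub_one (hf : Per N f) : ∑ ℓ ∈ cell N, f (ℓ - 1) = ∑ ℓ ∈ cell N, f ℓ := by
  simpa using (sum_cell_comp_add_one (f := fun ℓ => f (ℓ - 1)) (hf.apply_add_sub · 1)).symm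

lemma sum_cell_eq_of_telescoping (hH : Per N H) (h : ∀ ℓ, f ℓ - g ℓ = H (ℓ + 1) - H ℓ) :
    ∑ ℓ ∈ cell N, f ℓ = ∑ ℓ ∈ cell N, g ℓ := by
  rw [← sub_eq_zero, ← sum_sub_distrib]
  simp only [h, sum_sub_distrib, sum_cell_comp_add_one hH, sub_self]

lemma Per.bdiff (hf : Per N f) : Per N (bdiff f) := fun x => by
  simp only [_root_.bdiff, hf x, hf.apply_add_sub]

lemma exists_mem_cell_apply_eq (hN : 1 ≤ N) (hf : Per N f) (m : ℤ) :
    ∃ m' ∈ cell N, f m = f m' := by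
  have hq := Int.mul_ediv_add_emod (m + N - 1) (2 * N)
  have hr0 := Int.emod_nonneg (m + N - 1) (show (2 * N : ℤ) ≠ 0 by omega)
  have hr := Int.emod_lt_of_pos (m + N - 1) (show (0 : ℤ) < 2 * N by omega)
  have hcomm := mul_comm ((m + N - 1) / (2 * N)) (2 * (N : ℤ))
  refine ⟨m - (m + N - 1) / (2 * N) * (2 * N), ?_, (Function.Periodic.sub_int_mul_eq hf _).symm⟩
  simp only [cell, mem_Icc]
  omega

end Periodic

lemma card_cell (N : ℕ) : #(cell N) = 2 * N := by
  simp only [cell, Int.card_Icc]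
  omega

lemma abs_sub_le_sum_Ioc_abs_bdiff (u : ℤ → ℝ) {j m : ℤ} (h : j ≤ m) :
    |u m - u j| ≤ ∑ ℓ ∈ Ioc j m, |bdiff u ℓ| := by
  induction m, h using Int.leInduction with
  | base => simp
  | succ m hjm ih =>
    rw [← insert_Ioc_right_eq_Ioc_add_one hjm, sum_insert (by simp)]
    calc |u (m + 1) - u j| ≤ |bdiff u (m + 1)| + |u m - u j| := by
          simpa [bdiff] using abs_add_le (u (m + 1) - u m) (u m - u j)
      _ ≤ _ := by gcongr

lemma abs_sub_le_sum_cell_abs_bdiff {N : ℕ} (u : ℤ → ℝ) {j m : ℤ} (hj : j ∈ cell N)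
    (hm : m ∈ cell N) : |u m - u j| ≤ ∑ ℓ ∈ cell N, |bdiff u ℓ| := by
  wlog hjm : j ≤ m generalizing j m
  · rw [abs_sub_comm]; exact this hm hj (by omega)
  refine (abs_sub_le_sum_Ioc_abs_bdiff u hjm).trans
    (sum_le_sum_of_subset_of_nonneg ?_ fun _ _ _ => abs_nonneg _)
  intro x hx
  simp only [cell, mem_Icc, mem_Ioc] at hj hm hx ⊢
  omega

-- `u m` is the average of the `u m - u j`, each bounded by the total variation.
lemma abs_le_sum_cell_abs_bdiff {N : ℕ} (hN : 1 ≤ N) {u : ℤ → ℝ} (hu : Per N u)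
    (hz : MeanZero N u) (m : ℤ) : |u m| ≤ ∑ ℓ ∈ cell N, |bdiff u ℓ| := by
  obtain ⟨m, hm, hum⟩ := exists_mem_cell_apply_eq hN hu m
  have hcard : (0 : ℝ) < #(cell N) := by rw [card_cell]; positivity
  have hsum : #(cell N) * u m = ∑ j ∈ cell N, (u m - u j) := by
    rw [sum_sub_distrib, hz, sum_const, nsmul_eq_mul, sub_zero]
  rw [hum, ← mul_le_mul_iff_of_pos_left hcard, ← abs_of_pos hcard, ← abs_mul, hsum,
    abs_of_pos hcard, ← nsmul_eq_mul, ← sum_const]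
  exact (abs_sum_le_sum_abs _ _).trans
    (sum_le_sum fun j hj => abs_sub_le_sum_cell_abs_bdiff u hj hm)

lemma sum_abs_le_sqrt_card_mul_sqrt {ι : Type*} (s : Finset ι) (f : ι → ℝ) :
    ∑ i ∈ s, |f i| ≤ √(#s) * √(∑ i ∈ s, f i ^ 2) := by
  rw [← Real.sqrt_mul (by positivity)]
  refine Real.le_sqrt_of_sq_le ?_
  simpa only [sq_abs] using sq_sum_le_card_mul_sum_sq (s := s) (f := fun i => |f i|)

lemma abs_sum_mul_mul_le {ι : Type*} {s : Finset ι} {c a b : ι → ℝ} {d : ℝ}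
    (hc : ∀ i ∈ s, |c i| ≤ d) :
    |∑ i ∈ s, c i * (a i * b i)| ≤ d * ((∑ i ∈ s, a i ^ 2 + ∑ i ∈ s, b i ^ 2) / 2) := by
  rw [← sum_add_distrib, sum_div, mul_sum]
  refine (abs_sum_le_sum_abs _ _).trans (sum_le_sum fun i hi => ?_)
  have hab : |a i * b i| ≤ (a i ^ 2 + b i ^ 2) / 2 := by
    rw [abs_mul, ← sq_abs (a i), ← sq_abs (b i)]
    linarith [two_mul_le_add_sq |a i| |b i|]
  rw [abs_mul]
  exact mul_le_mul (hc i hi) hab (abs_nonneg _) ((abs_nonneg _).trans (hc i hi))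

lemma abs_sum_mul_mul_le_of_support {ι : Type*} {s t : Finset ι} (hst : s ⊆ t)
    {c a w : ι → ℝ} {d W : ℝ} (hc0 : ∀ i ∈ t, i ∉ s → c i = 0) (hc : ∀ i ∈ s, |c i| ≤ d)
    (hw : ∀ i ∈ s, |w i| ≤ W) :
    |∑ i ∈ t, c i * (a i * w i)| ≤ d * √(#s) * √(∑ i ∈ t, a i ^ 2) * W := by
  rcases s.eq_empty_or_nonempty with rfl | ⟨i₀, hi₀⟩
  · rw [sum_eq_zero fun i hi => by rw [hc0 i hi (notMem_empty i), zero_mul]]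
    simp
  have hd : 0 ≤ d := (abs_nonneg _).trans (hc i₀ hi₀)
  have hW : 0 ≤ W := (abs_nonneg _).trans (hw i₀ hi₀)
  rw [← sum_subset hst fun i hi his => by rw [hc0 i hi his, zero_mul]]
  calc |∑ i ∈ s, c i * (a i * w i)| ≤ ∑ i ∈ s, d * (|a i| * W) :=
        (abs_sum_le_sum_abs _ _).trans <| sum_le_sum fun i hi => by
          rw [abs_mul, abs_mul]
          exact mul_le_mul (hc i hi) (by gcongr; exact hw i hi) (by positivity) hd
    _ = d * (∑ i ∈ s, |a i|) * W := by
        rw [mul_sum, sum_mul]; exact sum_congr rfl fun i _ => by ring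
    _ ≤ d * (√(#s) * √(∑ i ∈ t, a i ^ 2)) * W := by
        gcongr
        refine (sum_abs_le_sqrt_card_mul_sqrt s a).trans ?_
        gcongr
    _ = d * √(#s) * √(∑ i ∈ t, a i ^ 2) * W := by ring

section Energy

variable {N : ℕ} {u β : ℤ → ℝ}

lemma eps_pos (hN : 1 ≤ N) : 0 < eps N := by
  rw [eps]; positivity

lemma nsq_D_eq (hN : 1 ≤ N) (u : ℤ → ℝ) :
    nsq N (D N u) = (∑ ℓ ∈ cell N, bdiff u ℓ ^ 2) / eps N := by
  have := (eps_pos hN).ne'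
  simp only [nsq, D, sq_abs, sum_div, bdiff]
  refine sum_congr rfl fun ℓ _ => ?_
  field_simp

lemma ip_Lbqcf_eq (hN : 1 ≤ N) (hu : Per N u) (cF c2F : ℝ) (β : ℤ → ℝ) :
    ip N (Lbqcf N cF c2F β u) u
      = ((cF + 4 * c2F) * ∑ ℓ ∈ cell N, bdiff u ℓ ^ 2
          - c2F * ∑ ℓ ∈ cell N, β ℓ * secondDiff (secondDiff u) ℓ * u ℓ) / eps N := by
  have hε := (eps_pos hN).ne'
  rw [mul_sum, mul_sum, ← sum_sub_distrib, sum_div, ip]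
  refine sum_cell_eq_of_telescoping
    (H := fun ℓ => (cF + 4 * c2F) * (u (ℓ - 1) ^ 2 - u ℓ * u (ℓ - 1)) / eps N)
    (fun x => by simp only [hu x, hu.apply_add_sub]) fun ℓ => ?_
  simp only [Lbqcf, bdiff, secondDiff, add_sub_cancel_right, sub_add_cancel, add_assoc, sub_sub,
    one_add_one_eq_two]
  field_simp
  ring_nf

lemma sum_mul_secondDiff_secondDiff_mul_eq (hu : Per N u) (hβ : Per N β) :
    ∑ ℓ ∈ cell N, β ℓ * secondDiff (secondDiff u) ℓ * u ℓ
      = ∑ ℓ ∈ cell N, β ℓ * secondDiff u ℓ ^ 2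
        - (∑ ℓ ∈ cell N, secondDiff β ℓ * (bdiff u ℓ * bdiff u ℓ)
          + ∑ ℓ ∈ cell N, secondDiff β ℓ * (bdiff u ℓ * bdiff u (ℓ - 1))
          + ∑ ℓ ∈ cell N, thirdDiff β ℓ * (bdiff u ℓ * u (ℓ - 2))) := by
  simp only [← sum_add_distrib, ← sum_sub_distrib]
  -- `H` collects the boundary terms of the two summations by parts.
  refine sum_cell_eq_of_telescoping
    (H := fun ℓ => (β (ℓ - 2) - 2 * β (ℓ - 1)) * u (ℓ - 2) * bdiff u ℓ
      + β (ℓ - 1) * (u (ℓ - 1) * u (ℓ + 1) - u ℓ ^ 2) + β ℓ * u (ℓ - 1) * bdiff u (ℓ - 1))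
    (fun x => by simp only [bdiff, hu x, hβ x, hu.apply_add_sub, hu.apply_add_add, hβ.apply_add_sub,
      sub_sub]) fun ℓ => ?_
  simp only [bdiff, secondDiff, thirdDiff, add_sub_cancel_right, sub_add_cancel, add_assoc, sub_sub,
    one_add_one_eq_two]
  ring_nf

lemma sum_mul_sq_secondDiff_le (hu : Per N u) (hβ : ∀ ℓ ∈ cell N, β ℓ ∈ Set.Icc (0 : ℝ) 1) :
    ∑ ℓ ∈ cell N, β ℓ * secondDiff u ℓ ^ 2 ≤ 4 * ∑ ℓ ∈ cell N, bdiff u ℓ ^ 2 := by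
  calc ∑ ℓ ∈ cell N, β ℓ * secondDiff u ℓ ^ 2
      ≤ ∑ ℓ ∈ cell N, (2 * bdiff u (ℓ + 1) ^ 2 + 2 * bdiff u ℓ ^ 2) := sum_le_sum fun ℓ hℓ => by
        have hsd : secondDiff u ℓ = bdiff u (ℓ + 1) - bdiff u ℓ := by
          simp only [secondDiff, bdiff, add_sub_cancel_right]; ring
        obtain ⟨hβ0, hβ1⟩ := hβ ℓ hℓ
        rw [hsd]
        nlinarith [sq_nonneg (bdiff u (ℓ + 1) + bdiff u ℓ), sq_nonneg (bdiff u (ℓ + 1) - bdiff u ℓ)]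
    _ = 4 * ∑ ℓ ∈ cell N, bdiff u ℓ ^ 2 := by
      rw [sum_add_distrib, ← mul_sum, ← mul_sum,
        sum_cell_comp_add_one (f := fun ℓ => bdiff u ℓ ^ 2) fun x => by simp only [hu.bdiff x]]
      ring

lemma abs_remainder_le (hN : 1 ≤ N) (hu : Per N u) (hz : MeanZero N u) {I : Finset ℤ}
    (hI : I ⊆ cell N) {d₂ d₃ : ℝ} (h₂ : ∀ ℓ ∈ cell N, |secondDiff β ℓ| ≤ d₂)
    (h₃z : ∀ ℓ ∈ cell N, ℓ ∉ I → thirdDiff β ℓ = 0) (h₃ : ∀ ℓ ∈ I, |thirdDiff β ℓ| ≤ d₃) :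
    |∑ ℓ ∈ cell N, secondDiff β ℓ * (bdiff u ℓ * bdiff u ℓ)
        + ∑ ℓ ∈ cell N, secondDiff β ℓ * (bdiff u ℓ * bdiff u (ℓ - 1))
        + ∑ ℓ ∈ cell N, thirdDiff β ℓ * (bdiff u ℓ * u (ℓ - 2))|
      ≤ (2 * d₂ + d₃ * √(#I) * √(2 * N)) * ∑ ℓ ∈ cell N, bdiff u ℓ ^ 2 := by
  set B := ∑ ℓ ∈ cell N, bdiff u ℓ ^ 2
  have hB : √B * √B = B := Real.mul_self_sqrt (sum_nonneg fun _ _ => sq_nonneg _)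
  have hB' : ∑ ℓ ∈ cell N, bdiff u (ℓ - 1) ^ 2 = B :=
    sum_cell_comp_sub_one (f := fun ℓ => bdiff u ℓ ^ 2) fun x => by simp only [hu.bdiff x]
  have hsup (ℓ : ℤ) : |u (ℓ - 2)| ≤ √(2 * N) * √B := by
    refine (abs_le_sum_cell_abs_bdiff hN hu hz _).trans
      ((sum_abs_le_sqrt_card_mul_sqrt _ _).trans_eq ?_)
    rw [card_cell]; push_cast; rfl
  have hR₁ := abs_sum_mul_mul_le (a := bdiff u) (b := bdiff u) h₂
  have hR₂ := abs_sum_mul_mul_le (a := bdiff u) (b := fun ℓ => bdiff u (ℓ - 1)) h₂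
  have hR₃ := abs_sum_mul_mul_le_of_support (a := bdiff u) hI h₃z h₃ fun ℓ _ => hsup ℓ
  rw [hB'] at hR₂
  calc _ ≤ _ := abs_add_three _ _ _
    _ ≤ _ := add_le_add_three hR₁ hR₂ hR₃
    _ = _ := by linear_combination d₃ * √(#I) * √(2 * N) * hB

end Energy

lemma secondDiff_eq_eps_sq_mul_D2 {N : ℕ} (hN : 1 ≤ N) (f : ℤ → ℝ) (ℓ : ℤ) :
    secondDiff f ℓ = eps N ^ 2 * D2 N f ℓ := by
  have := (eps_pos hN).ne'
  simp only [secondDiff, D2, D, add_sub_cancel_right]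
  field_simp
  ring

lemma thirdDiff_eq_eps_cube_mul_D3 {N : ℕ} (hN : 1 ≤ N) (f : ℤ → ℝ) (ℓ : ℤ) :
    thirdDiff f ℓ = eps N ^ 3 * D3 N f ℓ := by
  have := (eps_pos hN).ne'
  simp only [thirdDiff, secondDiff, D3, D2, D, add_sub_cancel_right, sub_add_cancel, sub_sub,
    one_add_one_eq_two]
  field_simp
  ring

lemma abs_pow_mul_le_div_pow {ε k y C : ℝ} (hε : 0 < ε) (n : ℕ)
    (h : |y| ≤ C * ((k * ε) ^ n)⁻¹) : |ε ^ n * y| ≤ C / k ^ n := by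
  rw [abs_mul, abs_of_pos (pow_pos hε n)]
  calc ε ^ n * |y| ≤ ε ^ n * (C * ((k * ε) ^ n)⁻¹) := by gcongr
    _ = C / k ^ n := by rw [mul_pow]; field_simp

lemma rpow_neg_five_halves_mul_eps_rpow_neg_half {N : ℕ} (hN : 1 ≤ N) {k : ℝ} (hk : 0 < k) :
    k ^ (-(5 : ℝ) / 2) * eps N ^ (-(1 : ℝ) / 2) = √N / (k ^ 2 * √k) := by
  have hε := eps_pos hN
  rw [show -(5 : ℝ) / 2 = -((2 : ℕ) + 1 / 2) by norm_num, show -(1 : ℝ) / 2 = -(1 / 2) by norm_num,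
    Real.rpow_neg hk.le, Real.rpow_neg hε.le, Real.rpow_add hk, Real.rpow_natCast,
    ← Real.sqrt_eq_rpow, ← Real.sqrt_eq_rpow, eps, one_div, Real.sqrt_inv, inv_inv]
  ring

lemma remainder_coeff_le {N : ℕ} (hN : 1 ≤ N) {k C : ℝ} (hk : 0 < k) (hkN : k ≤ 2 * N)
    (hC : 0 ≤ C) :
    2 * (C / k ^ 2) + C / k ^ 3 * √k * √(2 * N)
      ≤ 3 * √2 * C * (k ^ (-(5 : ℝ) / 2) * eps N ^ (-(1 : ℝ) / 2)) := by
  have hkk : √k * √k = k := Real.mul_self_sqrt hk.le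
  have h₁ : C / k ^ 2 ≤ C * √(2 * N) / (k ^ 2 * √k) := by
    rw [le_div_iff₀ (by positivity), div_mul_eq_mul_div, div_le_iff₀ (by positivity)]
    have := Real.sqrt_le_sqrt hkN
    nlinarith [mul_le_mul_of_nonneg_left this hC]
  have h₂ : C / k ^ 3 * √k * √(2 * N) = C * √(2 * N) / (k ^ 2 * √k) := by
    rw [div_mul_eq_mul_div, div_mul_eq_mul_div, div_eq_div_iff (by positivity) (by positivity)]
    linear_combination C * √(2 * N) * k ^ 2 * hkk
  rw [rpow_neg_five_halves_mul_eps_rpow_neg_half hN hk, h₂, show 3 * √2 * C * (√N / (k ^ 2 * √k))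
    = 3 * (C * √(2 * N) / (k ^ 2 * √k)) by rw [Real.sqrt_mul zero_le_two]; ring]
  linarith

lemma min_mul_sub_le {a b B P R E : ℝ} (hB : 0 ≤ B) (hP₀ : 0 ≤ P) (hP : P ≤ 4 * B)
    (hR : |R| ≤ E * B) : (min a (a + 4 * b) - |b| * E) * B ≤ (a + 4 * b) * B - b * (P - R) := by
  have hbR : -(|b| * (E * B)) ≤ b * R := by
    linarith [neg_abs_le (b * R), abs_mul b R, mul_le_mul_of_nonneg_left hR (abs_nonneg b)]
  rcases le_total 0 b with hb | hb
  · have := mul_le_mul_of_nonneg_right (min_le_left a (a + 4 * b)) hB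
    nlinarith [mul_le_mul_of_nonneg_left hP hb]
  · have := mul_le_mul_of_nonneg_right (min_le_right a (a + 4 * b)) hB
    nlinarith [mul_nonpos_of_nonpos_of_nonneg hb hP₀]

/-- coercivity of the B-QCF operator:
`⟨L^{bqcf}u,u⟩ ≥ (c₀ − C₁|φ''_{2F}| K^{−5/2} ε^{−1/2}) ‖Du‖²`. -/
theorem stmt_10 (Cβ : ℝ) (hCβ : 0 < Cβ) :
    ∃ C₁ : ℝ, 0 < C₁ ∧
      ∀ N : ℕ, 1 ≤ N → ∀ cF c2F : ℝ, ∀ β : ℤ → ℝ, Per N β →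
        (∀ ℓ : ℤ, β ℓ ∈ Set.Icc (0 : ℝ) 1) →
        1 ≤ (interf N β).card →
        (∀ ℓ ∈ cell N, ℓ ∉ interf N β →
          D N β ℓ = 0 ∧ D2 N β ℓ = 0 ∧ D3 N β ℓ = 0) →
        (∀ ℓ ∈ cell N, |D N β ℓ| ≤ Cβ * (((interf N β).card : ℝ) * eps N)⁻¹) →
        (∀ ℓ ∈ cell N, |D2 N β ℓ| ≤ Cβ * ((((interf N β).card : ℝ) * eps N) ^ 2)⁻¹) →
        (∀ ℓ ∈ cell N, |D3 N β ℓ| ≤ Cβ * ((((interf N β).card : ℝ) * eps N) ^ 3)⁻¹) →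
        ∀ u : ℤ → ℝ, Per N u → MeanZero N u →
          ip N (Lbqcf N cF c2F β u) u
            ≥ (min cF (cF + 4 * c2F)
                - C₁ * |c2F| * ((interf N β).card : ℝ) ^ (-(5 : ℝ) / 2)
                    * eps N ^ (-(1 : ℝ) / 2)) * nsq N (D N u) := by
  refine ⟨3 * √2 * Cβ, by positivity, ?_⟩
  intro N hN cF c2F β hβ hβ01 hK hflat _ hD2 hD3 u hu hz
  have hε := eps_pos hN
  have hI : interf N β ⊆ cell N := filter_subset _ _
  have hk : (0 : ℝ) < #(interf N β) := by exact_mod_cast hK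
  have hkN : (#(interf N β) : ℝ) ≤ 2 * N := by
    exact_mod_cast (card_le_card hI).trans_eq (card_cell N)
  have h₂ : ∀ ℓ ∈ cell N, |secondDiff β ℓ| ≤ Cβ / #(interf N β) ^ 2 := fun ℓ hℓ => by
    rw [secondDiff_eq_eps_sq_mul_D2 hN]; exact abs_pow_mul_le_div_pow hε 2 (hD2 ℓ hℓ)
  have h₃ : ∀ ℓ ∈ interf N β, |thirdDiff β ℓ| ≤ Cβ / #(interf N β) ^ 3 := fun ℓ hℓ => by
    rw [thirdDiff_eq_eps_cube_mul_D3 hN]; exact abs_pow_mul_le_div_pow hε 3 (hD3 ℓ (hI hℓ))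
  have h₃z : ∀ ℓ ∈ cell N, ℓ ∉ interf N β → thirdDiff β ℓ = 0 := fun ℓ hℓ hℓI => by
    rw [thirdDiff_eq_eps_cube_mul_D3 hN, (hflat ℓ hℓ hℓI).2.2, mul_zero]
  have hR := (abs_remainder_le hN hu hz hI h₂ h₃z h₃).trans (mul_le_mul_of_nonneg_right
    (remainder_coeff_le hN hk hkN hCβ.le) (sum_nonneg fun _ _ => sq_nonneg _))
  rw [ip_Lbqcf_eq hN hu, nsq_D_eq hN, sum_mul_secondDiff_secondDiff_mul_eq hu hβ, ge_iff_le,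
    ← mul_div_assoc, div_le_div_iff_of_pos_right hε]
  refine (le_of_eq (by ring)).trans (min_mul_sub_le (sum_nonneg fun _ _ => sq_nonneg _)
    (sum_nonneg fun ℓ _ => mul_nonneg (hβ01 ℓ).1 (sq_nonneg _))
    (sum_mul_sq_secondDiff_le hu fun ℓ _ => hβ01 ℓ) hR)
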